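/- arXiv:math/0309140 — 3 statements merged into one kernel-verified Lean document; each statement's English description precedes it below -/
import Mathlib

section
/- Let n = p^k be a prime power and let G be a group satisfying g^n = 1 for all g ∈ G. Let N be the intersection of all normal subgroups of G of finite index, and let R = G/N. If the abelianization of G is a cyclic group, then R is isomorphic to the abelianization of G; in particular R is a finite cyclic group of order dividing n. -/
/-- The intersection of all normal subgroups of finite index of a group `G`. -/
def finiteResidual (G : Type*) [Group G] : Subgroup G :=
  ⨅ H ∈ {H : Subgroup G | H.Normal ∧ H.FiniteIndex}, H

instance finiteResidual_normal (G : Type*) [Group G] : (finiteResidual G).Normal := by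
  constructor
  intro n hn g
  simp only [finiteResidual, Subgroup.mem_iInf] at hn ⊢
  intro H hH
  exact hH.1.conj_mem n (hn H hH) g


/-!
Every finite quotient of `G` is a finite `p`-group, hence nilpotent, and its abelianization is a
quotient of that of `G`, hence cyclic. A nilpotent group with cyclic abelianization is cyclic: by
induction its central quotient is cyclic, so it is abelian and equal to its abelianization. Thus
every finite-index normal subgroup contains `[G, G]`; and `G ⧸ [G, G]`, being cyclic of exponent
dividing `p ^ k`, is finite, so the finite residual is exactly `[G, G]`. No appeal to the
restricted Burnside problem is needed.
-/

open Subgroup QuotientGroup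

theorem Abelianization.map_surjective {G H : Type*} [Group G] [Group H] {f : G →* H}
    (hf : Function.Surjective f) : Function.Surjective (Abelianization.map f) := by
  intro y
  induction y using QuotientGroup.induction_on with
  | H h =>
    obtain ⟨g, rfl⟩ := hf h
    exact ⟨Abelianization.of g, rfl⟩

theorem Group.isCyclic_of_isCyclic_abelianization (G : Type*) [Group G] [Group.IsNilpotent G]
    [IsCyclic (Abelianization G)] : IsCyclic G := by
  refine Group.nilpotent_center_quotient_ind
    (P := fun G _ _ ↦ IsCyclic (Abelianization G) → IsCyclic G) G
    (fun _ _ _ _ ↦ isCyclic_of_subsingleton) (fun G _ _ ih _ ↦ ?_) ‹_›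
  have := ih (isCyclic_of_surjective _ (Abelianization.map_surjective (mk'_surjective _)))
  let : CommGroup G := commGroupOfCyclicCenterQuotient (mk' (center G)) (by simp)
  exact isCyclic_of_surjective Abelianization.equivOfComm.symm
    Abelianization.equivOfComm.symm.surjective

theorem commutator_le_of_isCyclic_abelianization {G : Type*} [Group G]
    [IsCyclic (Abelianization G)] (H : Subgroup G) [H.Normal] [Group.IsNilpotent (G ⧸ H)] :
    commutator G ≤ H := by
  have : IsCyclic (Abelianization (G ⧸ H)) :=
    isCyclic_of_surjective _ (Abelianization.map_surjective (mk'_surjective H))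
  have := Group.isCyclic_of_isCyclic_abelianization (G ⧸ H)
  exact Normal.quotient_commutative_iff_commutator_le.mp inferInstance

theorem finiteResidual_eq_commutator {G : Type*} [Group G] [IsCyclic (Abelianization G)]
    [Finite (Abelianization G)]
    (hnil : ∀ (H : Subgroup G) [H.Normal], H.FiniteIndex → Group.IsNilpotent (G ⧸ H)) :
    finiteResidual G = commutator G := by
  have : Finite (G ⧸ commutator G) := ‹Finite (Abelianization G)›
  refine le_antisymm (iInf₂_le _ ⟨inferInstance, finiteIndex_of_finite_quotient⟩) ?_
  refine le_iInf₂ fun H ⟨_, hH⟩ ↦ ?_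
  have := hnil H hH
  exact commutator_le_of_isCyclic_abelianization H

theorem restricted_quotient_of_cyclic_abelianization_general
    (p k : ℕ) (hp : p.Prime)
    (G : Type*) [Group G]
    (hexp : ∀ g : G, g ^ (p ^ k) = 1)
    (hab : IsCyclic (Abelianization G)) :
    Nonempty ((G ⧸ finiteResidual G) ≃* Abelianization G) ∧
      Finite (G ⧸ finiteResidual G) ∧ IsCyclic (G ⧸ finiteResidual G) ∧
      Nat.card (G ⧸ finiteResidual G) ∣ p ^ k := by
  have : Fact p.Prime := ⟨hp⟩
  have hcard : Nat.card (Abelianization G) ∣ p ^ k := by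
    rw [← IsCyclic.exponent_eq_card]
    exact (Group.exponent_quotient_dvd _).trans (Monoid.exponent_dvd_of_forall_pow_eq_one hexp)
  have : Finite (Abelianization G) :=
    Nat.finite_of_card_ne_zero (ne_zero_of_dvd_ne_zero (pow_ne_zero k hp.ne_zero) hcard)
  have hpG : IsPGroup p G := fun g ↦ ⟨k, hexp g⟩
  have e : (G ⧸ finiteResidual G) ≃* Abelianization G :=
    quotientMulEquivOfEq (finiteResidual_eq_commutator fun H _ _ ↦
      have : Finite (G ⧸ H) := finite_quotient_of_finiteIndex
      (hpG.to_quotient H).isNilpotent)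
  exact ⟨⟨e⟩, .of_equiv _ e.symm.toEquiv, isCyclic_of_surjective e.symm e.symm.surjective,
    Nat.card_congr e.toEquiv ▸ hcard⟩

/-- Let `n = p^k` be a prime power and `G` a group of exponent dividing `n`.  If the
abelianization of `G` is cyclic, then the restricted quotient `R = G ⧸ N`, where `N` is the
intersection of all finite-index normal subgroups, is isomorphic to the abelianization of `G`;
in particular `R` is a finite cyclic group of order dividing `n`. -/
theorem restricted_quotient_of_cyclic_abelianization
    (p k : ℕ) (hp : p.Prime) (hk : 0 < k)
    (G : Type*) [Group G]
    (hexp : ∀ g : G, g ^ (p ^ k) = 1)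
    (hab : IsCyclic (Abelianization G)) :
    Nonempty ((G ⧸ finiteResidual G) ≃* Abelianization G) ∧
      Finite (G ⧸ finiteResidual G) ∧ IsCyclic (G ⧸ finiteResidual G) ∧
      Nat.card (G ⧸ finiteResidual G) ∣ p ^ k :=
  restricted_quotient_of_cyclic_abelianization_general p k hp G hexp hab
end

section
/- Let x and y denote the images of the two free generators in the free Burnside group B(2,4). Then the element R₁ = x y⁻² x² y⁻² x³ y⁻² x² y⁻² of B(2,4) equals the commutator [x, [x², y²]]. -/
/-- The free Burnside group `B(r, n)`: the quotient of the free group on `r` generators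
by the normal closure of the set of all `n`-th powers. -/
abbrev FreeBurnsideGroup (r n : ℕ) : Type :=
  FreeGroup (Fin r) ⧸
    Subgroup.normalClosure {x : FreeGroup (Fin r) | ∃ w : FreeGroup (Fin r), x = w ^ n}

/-- The commutator convention of the paper: `[a, b] = a⁻¹ b⁻¹ a b`. -/
def pcomm {G : Type*} [Group G] (a b : G) : G := a⁻¹ * b⁻¹ * a * b

lemma freeBurnside_pow_eq_one (r n : ℕ) (g : FreeBurnsideGroup r n) : g ^ n = 1 := by
  induction g using QuotientGroup.induction_on with
  | H w =>
    rw [← QuotientGroup.mk_pow, QuotientGroup.eq_one_iff]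
    exact Subgroup.subset_normalClosure ⟨w, rfl⟩

lemma aux_identity {G : Type*} [Group G] (h : ∀ g : G, g ^ 4 = 1) (a b : G) :
    a * b⁻¹ ^ 2 * a ^ 2 * b⁻¹ ^ 2 * a ^ 3 * b⁻¹ ^ 2 * a ^ 2 * b⁻¹ ^ 2 =
      pcomm a (pcomm (a ^ 2) (b ^ 2)) := by
  have sq_self_inv : ∀ g : G, (g ^ 2)⁻¹ = g ^ 2 := by
    intro g
    have : g ^ 2 * g ^ 2 = 1 := by rw [← pow_add]; exact h g
    exact inv_eq_of_mul_eq_one_right this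
  set w : G := a ^ 2 * b⁻¹ ^ 2 with hw
  have hc : pcomm (a ^ 2) (b ^ 2) = w ^ 2 := by
    unfold pcomm
    rw [sq_self_inv a, sq_self_inv b, hw, inv_pow, sq_self_inv b]
    simp only [pow_two]
    group
  have hcinv : (w ^ 2)⁻¹ = w ^ 2 := by
    have : w ^ 2 * w ^ 2 = 1 := by rw [← pow_add]; exact h w
    exact inv_eq_of_mul_eq_one_right this
  rw [hc]
  unfold pcomm
  rw [hcinv, hw]
  simp only [pow_two, pow_succ, pow_one]
  group

/-- In `B(2,4)`, with `x, y` the images of the two free generators, the element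
`R₁ = x y⁻² x² y⁻² x³ y⁻² x² y⁻²` equals the commutator `[x, [x², y²]]`. -/
theorem freeBurnside_R1_eq_comm :
    let x : FreeBurnsideGroup 2 4 := QuotientGroup.mk (FreeGroup.of 0)
    let y : FreeBurnsideGroup 2 4 := QuotientGroup.mk (FreeGroup.of 1)
    x * y⁻¹ ^ 2 * x ^ 2 * y⁻¹ ^ 2 * x ^ 3 * y⁻¹ ^ 2 * x ^ 2 * y⁻¹ ^ 2 =
      pcomm x (pcomm (x ^ 2) (y ^ 2)) := by
  intro x y
  exact aux_identity (freeBurnside_pow_eq_one 2 4) x y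
end

section
/- For every natural number r, the free Burnside group B(r,3) of exponent 3 is finite, of order 3^(r + C(r,2) + C(r,3)) where C(r,k) denotes the binomial coefficient. -/
open scoped commutatorElement

section RingStep
variable {G : Type*} [Group G] {R : Type*} [Ring R]

/-- Generic ring computation: square-zero "Fox derivative" style elements coming from a
group hom into `1 + u` units, in characteristic 3, have vanishing triple products. -/
theorem triple_prod_zero (u : G → R)
    (hmul : ∀ g h, u (g * h) = u g + u h + u g * u h)
    (hsq : ∀ g, u g * u g = 0)
    (hchar : ∀ t : R, t + t + t = 0) :
    ∀ g h k, u g * u h * u k = 0 := by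
  have star : ∀ g h, u g * u h + u h * u g + u g * u h * u g + u h * u g * u h
      + u g * u h * u g * u h = 0 := by
    intro g h
    have h0 : u (g * h) * u (g * h) = 0 := hsq (g * h)
    rw [hmul g h] at h0
    calc u g * u h + u h * u g + u g * u h * u g + u h * u g * u h + u g * u h * u g * u h
        = (u g + u h + u g * u h) * (u g + u h + u g * u h)
          - u g * u g - u h * u h - (u g * u g) * u h - u g * (u h * u h) := by noncomm_ring
      _ = 0 := by rw [h0, hsq, hsq]; noncomm_ring
  have haba : ∀ g h, u g * u h * u g = 0 := by
    have s2 : ∀ g h, u g * u h * u g + u g * u h * u g * u h = 0 := by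
      intro g h
      calc u g * u h * u g + u g * u h * u g * u h
          = u g * (u g * u h + u h * u g + u g * u h * u g + u h * u g * u h
              + u g * u h * u g * u h)
            - (u g * u g) * u h - (u g * u g) * (u h * u g)
            - (u g * u g) * (u h * u g * u h) := by noncomm_ring
        _ = 0 := by rw [star g h, hsq]; noncomm_ring
    have s3 : ∀ g h, u h * u g * u h + u g * u h * u g * u h = 0 := by
      intro g h
      calc u h * u g * u h + u g * u h * u g * u h
          = (u g * u h + u h * u g + u g * u h * u g + u h * u g * u h
              + u g * u h * u g * u h) * u h
            - u g * (u h * u h) - (u h * u g) * (u h * u h)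
            - (u g * u h * u g) * (u h * u h) := by noncomm_ring
        _ = 0 := by rw [star g h, hsq]; noncomm_ring
    have heq : ∀ g h, u g * u h * u g = u h * u g * u h := by
      intro g h
      have : u g * u h * u g - u h * u g * u h
          = (u g * u h * u g + u g * u h * u g * u h)
            - (u h * u g * u h + u g * u h * u g * u h) := by noncomm_ring
      rw [s2 g h, s3 g h, sub_zero] at this
      exact sub_eq_zero.mp this
    have habab : ∀ g h, u g * u h * u g * u h = 0 := by
      intro g h
      calc u g * u h * u g * u h = (u g * u h * u g) * u h := by noncomm_ring
        _ = (u h * u g * u h) * u h := by rw [heq g h]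
        _ = (u h * u g) * (u h * u h) := by noncomm_ring
        _ = 0 := by rw [hsq]; noncomm_ring
    intro g h
    have := s2 g h
    rw [habab g h, add_zero] at this
    exact this
  have habab : ∀ g h, u g * u h * u g * u h = 0 := by
    intro g h
    calc u g * u h * u g * u h = (u g * u h * u g) * u h := by noncomm_ring
      _ = 0 := by rw [haba g h]; noncomm_ring
  have hanti : ∀ g h, u g * u h + u h * u g = 0 := by
    intro g h
    have := star g h
    rw [haba g h, haba h g] at this
    simpa using this
  intro g h k
  -- use w := u k ; a := u g ; b := u h
  have hwabw : u k * (u g * u h) * u k = 0 := by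
    have e1 : u k * u (g * h) * u k = 0 := haba k (g * h)
    rw [hmul g h] at e1
    have : u k * (u g * u h) * u k
        = u k * (u g + u h + u g * u h) * u k - u k * u g * u k - u k * u h * u k := by
      noncomm_ring
    rw [e1, haba k g, haba k h] at this
    simpa using this
  have hneg1 : u k * u g = -(u g * u k) := eq_neg_of_add_eq_zero_left (hanti k g)
  have hneg2 : u k * u h = -(u h * u k) := eq_neg_of_add_eq_zero_left (hanti k h)
  have hwab_eq : u k * (u g * u h) = u g * u h * u k := by
    calc u k * (u g * u h) = (u k * u g) * u h := by noncomm_ring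
      _ = (-(u g * u k)) * u h := by rw [hneg1]
      _ = -(u g * (u k * u h)) := by noncomm_ring
      _ = -(u g * (-(u h * u k))) := by rw [hneg2]
      _ = u g * u h * u k := by noncomm_ring
  have hwab : u k * (u g * u h) + (u g * u h) * u k = 0 := by
    have h1 := hanti k (g * h)
    rw [hmul g h] at h1
    have : u k * (u g * u h) + (u g * u h) * u k
        = (u k * (u g + u h + u g * u h) + (u g + u h + u g * u h) * u k)
          - (u k * u g + u g * u k) - (u k * u h + u h * u k) := by noncomm_ring
    rw [h1, hanti k g, hanti k h] at this
    simpa using this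
  have h2 : u g * u h * u k + u g * u h * u k = 0 := by
    have := hwab
    rw [hwab_eq] at this
    calc u g * u h * u k + u g * u h * u k
        = u g * u h * u k + (u g * u h) * u k := by noncomm_ring
      _ = 0 := this
  have h3' := hchar (u g * u h * u k)
  have : u g * u h * u k
      = (u g * u h * u k + u g * u h * u k + u g * u h * u k)
        - (u g * u h * u k + u g * u h * u k) := by noncomm_ring
  rw [h3', h2, sub_zero] at this
  exact this

end RingStep

section Exp3
variable {G : Type*} [Group G] (h3 : ∀ g : G, g ^ 3 = 1)
include h3

theorem cube_eq_one' (g : G) : g * (g * g) = 1 := by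
  have := h3 g; rwa [pow_succ, pow_succ, pow_one, mul_assoc] at this

theorem inv_eq_sq (g : G) : g⁻¹ = g * g :=
  inv_eq_of_mul_eq_one_right (cube_eq_one' h3 g)

theorem inv_mul_inv_eq (g : G) : g⁻¹ * g⁻¹ = g := by
  rw [inv_eq_sq h3]
  calc g * g * (g * g) = g * (g * (g * g)) := by group
    _ = g * 1 := by rw [cube_eq_one' h3]
    _ = g := mul_one g

theorem aba_eq (a b : G) : a * b * a = (b * a * b)⁻¹ := by
  apply eq_inv_of_mul_eq_one_right
  calc b * a * b * (a * b * a) = (b * a) * ((b * a) * (b * a)) := by group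
    _ = 1 := cube_eq_one' h3 (b * a)

theorem commute_conj (x y : G) : Commute x (y * x * y⁻¹) := by
  have e1 : x * (y * x * y⁻¹) = y⁻¹ * x⁻¹ * y := by
    calc x * (y * x * y⁻¹) = (x * y * x) * y⁻¹ := by group
      _ = (y * x * y)⁻¹ * y⁻¹ := by rw [aba_eq h3]
      _ = y⁻¹ * x⁻¹ * (y⁻¹ * y⁻¹) := by group
      _ = y⁻¹ * x⁻¹ * y := by rw [inv_mul_inv_eq h3]
  have e2 : (y * x * y⁻¹) * x = y⁻¹ * x⁻¹ * y := by
    calc (y * x * y⁻¹) * x = y * (x * y⁻¹ * x) := by group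
      _ = y * (y⁻¹ * x * y⁻¹)⁻¹ := by rw [aba_eq h3]
      _ = (y * y) * (x⁻¹ * y) := by group
      _ = y⁻¹ * (x⁻¹ * y) := by rw [← inv_eq_sq h3]
      _ = y⁻¹ * x⁻¹ * y := by group
  exact e1.trans e2.symm

theorem commute_comm_left (x y : G) : Commute x ⁅x, y⁆ := by
  have h1 : Commute x (y * x⁻¹ * y⁻¹) := by
    have := (commute_conj h3 x y).inv_right
    rwa [show (y * x * y⁻¹)⁻¹ = y * x⁻¹ * y⁻¹ by group] at this
  have h2 : Commute x (x * (y * x⁻¹ * y⁻¹)) := (Commute.refl x).mul_right h1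
  rwa [show x * (y * x⁻¹ * y⁻¹) = ⁅x, y⁆ by rw [commutatorElement_def]; group] at h2

theorem commute_comm_right (x y : G) : Commute y ⁅x, y⁆ := by
  have := (commute_comm_left h3 y x).inv_right
  rwa [commutatorElement_inv] at this

theorem engel (m g : G) : ⁅⁅m, g⁆, g⁆ = 1 :=
  commutatorElement_eq_one_iff_commute.mpr (commute_comm_right h3 m g).symm

end Exp3

section RS
variable {G : Type*} [Group G]

variable (h3 : ∀ g : G, g ^ 3 = 1)
include h3

theorem commute_of_mem_normalClosure_singleton (x : G) :
    ∀ a ∈ Subgroup.normalClosure ({x} : Set G), ∀ b ∈ Subgroup.normalClosure ({x} : Set G),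
      Commute a b := by
  have hNC : Subgroup.normalClosure ({x} : Set G)
      = Subgroup.closure (Group.conjugatesOfSet ({x} : Set G)) := rfl
  have hconj : ∀ p ∈ Group.conjugatesOfSet ({x} : Set G),
      ∀ q ∈ Group.conjugatesOfSet ({x} : Set G), Commute p q := by
    intro p hp q hq
    rw [Group.mem_conjugatesOfSet_iff] at hp hq
    obtain ⟨a, ha, hca⟩ := hp
    obtain ⟨b, hb, hcb⟩ := hq
    rw [Set.mem_singleton_iff] at ha hb
    rw [ha] at hca; rw [hb] at hcb
    obtain ⟨c, hc⟩ := isConj_iff.mp hca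
    obtain ⟨d, hd⟩ := isConj_iff.mp hcb
    subst hc; subst hd
    have key := (commute_conj h3 x (c⁻¹ * d)).eq
    show (c * x * c⁻¹) * (d * x * d⁻¹) = (d * x * d⁻¹) * (c * x * c⁻¹)
    calc (c * x * c⁻¹) * (d * x * d⁻¹)
        = c * (x * ((c⁻¹ * d) * x * (c⁻¹ * d)⁻¹)) * c⁻¹ := by group
      _ = c * (((c⁻¹ * d) * x * (c⁻¹ * d)⁻¹) * x) * c⁻¹ := by rw [key]
      _ = (d * x * d⁻¹) * (c * x * c⁻¹) := by group
  have pass1 : ∀ q ∈ Group.conjugatesOfSet ({x} : Set G),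
      ∀ b ∈ Subgroup.normalClosure ({x} : Set G), Commute q b := by
    intro q hq b hb
    have hle : Subgroup.normalClosure ({x} : Set G) ≤ Subgroup.centralizer {q} := by
      rw [hNC]
      refine (Subgroup.closure_le _).mpr ?_
      intro p hp
      rw [SetLike.mem_coe, Subgroup.mem_centralizer_iff]
      intro g hg
      rw [Set.mem_singleton_iff] at hg
      rw [hg]
      exact (hconj q hq p hp).eq
    have := Subgroup.mem_centralizer_iff.mp (hle hb) q (Set.mem_singleton q)
    exact this
  intro a ha b hb
  have hle : Subgroup.normalClosure ({x} : Set G) ≤ Subgroup.centralizer {b} := by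
    rw [hNC]
    refine (Subgroup.closure_le _).mpr ?_
    intro p hp
    rw [SetLike.mem_coe, Subgroup.mem_centralizer_iff]
    intro g hg
    rw [Set.mem_singleton_iff] at hg
    rw [hg]
    exact ((pass1 p hp b hb).symm).eq
  exact (Subgroup.mem_centralizer_iff.mp (hle ha) b (Set.mem_singleton b)).symm

theorem gamma4 (x y z w : G) : ⁅⁅⁅x, y⁆, z⁆, w⁆ = 1 := by
  set N := Subgroup.normalClosure ({x} : Set G) with hNdef
  haveI hNn : N.Normal := Subgroup.normalClosure_normal
  have hcomm := commute_of_mem_normalClosure_singleton h3 x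
  letI : CommGroup ↥N :=
    { (inferInstance : Group ↥N) with
      mul_comm := fun a b => Subtype.ext (hcomm a a.2 b b.2).eq }
  set A := Additive ↥N with hAdef
  let e : G → AddMonoid.End A := fun g =>
    MonoidHom.toAdditive ((MulAut.conjNormal (H := N) g).toMonoidHom)
  let u : G → AddMonoid.End A := fun g => e g - 1
  have hcompose : ∀ (g h : G) (a : A), e (g * h) a = e g (e h a) := by
    intro g h a
    show MonoidHom.toAdditive ((MulAut.conjNormal (H := N) (g * h)).toMonoidHom) a = _
    rw [map_mul]
    rfl
  have happly : ∀ (g : G) (m : ↥N),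
      e g (Additive.ofMul m) = Additive.ofMul ((MulAut.conjNormal (H := N) g) m) :=
    fun g m => rfl
  have hu : ∀ (g : G) (a : A),
      u g a = Additive.ofMul (((MulAut.conjNormal (H := N) g) a.toMul) * (a.toMul)⁻¹) := by
    intro g a
    show e g a - (1 : AddMonoid.End A) a = _
    have h1 : (1 : AddMonoid.End A) a = a := rfl
    rw [h1]
    have h2 : e g a = Additive.ofMul ((MulAut.conjNormal (H := N) g) a.toMul) := rfl
    rw [h2]
    rw [show a = Additive.ofMul a.toMul from rfl, ← ofMul_div, div_eq_mul_inv]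
    rfl
  have hmul : ∀ g h, u (g * h) = u g + u h + u g * u h := by
    intro g h
    refine AddMonoidHom.ext fun a => ?_
    have expand : (u g + u h + u g * u h) a = u g a + u h a + u g (u h a) := rfl
    show (u (g * h)) a = u g a + u h a + u g (u h a)
    show e (g * h) a - a = (e g a - a) + (e h a - a) + (u g) ((u h) a)
    have : (u g) ((u h) a) = e g (e h a - a) - (e h a - a) := rfl
    rw [this, map_sub, hcompose]
    abel
  have hsq : ∀ g, u g * u g = 0 := by
    intro g
    refine AddMonoidHom.ext fun a => ?_
    show (u g) ((u g) a) = 0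
    rw [hu g a]
    rw [hu g]
    rw [toMul_ofMul]
    set m := a.toMul with hm
    set K := ((MulAut.conjNormal (H := N) g) m) * m⁻¹ with hK
    have hfix : (MulAut.conjNormal (H := N) g) K = K := by
      apply Subtype.ext
      have hco : ((MulAut.conjNormal (H := N) g) K : G) = g * (K : G) * g⁻¹ :=
        MulAut.conjNormal_apply g K
      rw [hco]
      have hKco : (K : G) = ⁅g, (m : G)⁆ := by
        rw [hK]
        push_cast [MulAut.conjNormal_apply]
        rw [commutatorElement_def]
      rw [hKco]
      have hc := (commute_comm_left h3 g (m : G)).eq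
      rw [hc]
      group
    rw [hfix]
    rw [mul_inv_cancel]
    rfl
  have hchar : ∀ t : AddMonoid.End A, t + t + t = 0 := by
    intro t
    refine AddMonoidHom.ext fun a => ?_
    show t a + t a + t a = 0
    set b := t a
    have key : b.toMul * (b.toMul * b.toMul) = 1 := by
      have h := cube_eq_one' h3 ((b.toMul : ↥N) : G)
      exact Subtype.ext (by exact_mod_cast h)
    have : b + b + b = Additive.ofMul (b.toMul * b.toMul * b.toMul) := rfl
    rw [this, show b.toMul * b.toMul * b.toMul = b.toMul * (b.toMul * b.toMul) by group, key]
    rfl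
  have htriple := triple_prod_zero u hmul hsq hchar
  -- chain
  have hxN : x ∈ N := Subgroup.subset_normalClosure (Set.mem_singleton x)
  let mm : ↥N → G → ↥N := fun c g => (((MulAut.conjNormal (H := N) g) c) * c⁻¹)⁻¹
  have hmmco : ∀ (c : ↥N) (g : G), ((mm c g : ↥N) : G) = ⁅(c : G), g⁆ := by
    intro c g
    show ((((MulAut.conjNormal (H := N) g) c) * c⁻¹)⁻¹ : ↥N).val = _
    push_cast [MulAut.conjNormal_apply]
    rw [commutatorElement_def]
    group
  have hmmadd : ∀ (c : ↥N) (g : G), Additive.ofMul (mm c g) = -(u g (Additive.ofMul c)) := by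
    intro c g
    rw [hu g]
    rw [toMul_ofMul]
    rw [← ofMul_inv]
  let c0 : ↥N := ⟨x, hxN⟩
  let c1 := mm c0 y
  let c2 := mm c1 z
  let c3 := mm c2 w
  have hc3 : (c3 : G) = ⁅⁅⁅x, y⁆, z⁆, w⁆ := by
    show ((mm c2 w : ↥N) : G) = _
    rw [hmmco]
    congr 1
    show ((mm c1 z : ↥N) : G) = _
    rw [hmmco]
    congr 1
    exact hmmco c0 y
  have hzero : Additive.ofMul c3 = 0 := by
    have e3 : Additive.ofMul c3 = -(u w (Additive.ofMul c2)) := hmmadd c2 w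
    have e2 : Additive.ofMul c2 = -(u z (Additive.ofMul c1)) := hmmadd c1 z
    have e1 : Additive.ofMul c1 = -(u y (Additive.ofMul c0)) := hmmadd c0 y
    rw [e3, e2, e1]
    have hn : ∀ (f : AddMonoid.End A) (v : A), f (-v) = -(f v) := fun f v => (f : A →+ A).map_neg v
    simp only [hn]
    have hid : u w (u z (u y (Additive.ofMul c0))) = (u w * u z * u y) (Additive.ofMul c0) := rfl
    rw [hid, htriple w z y]
    simp
  have : c3 = 1 := by
    have := congrArg Additive.toMul hzero
    simpa using this
  rw [← hc3, this]
  simp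

end RS

section TCalc
variable {G : Type*} [Group G] (h3 : ∀ g : G, g ^ 3 = 1)
include h3

theorem t_central (a b c g : G) : Commute ⁅⁅a, b⁆, c⁆ g :=
  commutatorElement_eq_one_iff_commute.mp (gamma4 h3 a b c g)

omit h3 in
theorem conj_eq_of_commute {g a : G} (h : Commute g a) : g * a * g⁻¹ = a := by
  rw [h.eq]; group

omit h3 in
theorem comm_mul_right_exp (a b c : G) : ⁅a, b * c⁆ = ⁅a, b⁆ * (b * ⁅a, c⁆ * b⁻¹) := by
  simp only [commutatorElement_def]; group

omit h3 in
theorem comm_mul_left_exp (x y c : G) : ⁅x * y, c⁆ = (x * ⁅y, c⁆ * x⁻¹) * ⁅x, c⁆ := by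
  simp only [commutatorElement_def]; group

omit h3 in
theorem comm_pq_exp (p q d : G) : ⁅p * q, d⁆ = (p * ⁅q, d⁆ * p⁻¹) * ⁅p, d⁆ := by
  simp only [commutatorElement_def]; group

omit h3 in
theorem comm_conj_exp (x u d : G) : ⁅x * u * x⁻¹, d⁆ = x * ⁅u, x⁻¹ * d * x⁆ * x⁻¹ := by
  simp only [commutatorElement_def]; group

theorem t_mul_right (a b g h : G) :
    ⁅⁅a, b⁆, g * h⁆ = ⁅⁅a, b⁆, g⁆ * ⁅⁅a, b⁆, h⁆ := by
  rw [comm_mul_right_exp, conj_eq_of_commute ((t_central h3 a b h g).symm)]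

theorem t_inv_right (a b g : G) : ⁅⁅a, b⁆, g⁻¹⁆ = ⁅⁅a, b⁆, g⁆⁻¹ := by
  have h1 : ⁅⁅a, b⁆, g⁻¹ * g⁆ = ⁅⁅a, b⁆, g⁻¹⁆ * ⁅⁅a, b⁆, g⁆ := t_mul_right h3 a b g⁻¹ g
  rw [inv_mul_cancel] at h1
  have h2 : ⁅⁅a, b⁆, (1 : G)⁆ = 1 := by simp
  rw [h2] at h1
  exact eq_inv_of_mul_eq_one_left h1.symm


/-- conjugating the middle: `⁅x u x⁻¹, d⁆ = ⁅u,d⁆` when `u` is a commutator. -/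
theorem t_conj_first (x y c d : G) : ⁅x * ⁅y, c⁆ * x⁻¹, d⁆ = ⁅⁅y, c⁆, d⁆ := by
  rw [comm_conj_exp]
  have e1 : x⁻¹ * d * x = x⁻¹ * (d * x) := by group
  rw [e1, t_mul_right h3, show (d : G) * x = d * x from rfl]
  rw [show ⁅⁅y,c⁆, d * x⁆ = ⁅⁅y,c⁆,d⁆ * ⁅⁅y,c⁆,x⁆ from t_mul_right h3 y c d x]
  rw [t_inv_right h3]
  have hcc : Commute ⁅⁅y, c⁆, x⁆ ⁅⁅y, c⁆, d⁆ := t_central h3 y c x _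
  calc x * (⁅⁅y,c⁆,x⁆⁻¹ * (⁅⁅y,c⁆,d⁆ * ⁅⁅y,c⁆,x⁆)) * x⁻¹
      = x * (⁅⁅y,c⁆,x⁆⁻¹ * (⁅⁅y,c⁆,x⁆ * ⁅⁅y,c⁆,d⁆)) * x⁻¹ := by rw [hcc.eq]
    _ = x * ⁅⁅y,c⁆,d⁆ * x⁻¹ := by group
    _ = ⁅⁅y,c⁆,d⁆ := conj_eq_of_commute (t_central h3 y c d x).symm

theorem t_mul_left (x y c d : G) :
    ⁅⁅x * y, c⁆, d⁆ = ⁅⁅x, c⁆, d⁆ * ⁅⁅y, c⁆, d⁆ := by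
  rw [comm_mul_left_exp]
  rw [comm_pq_exp]
  rw [t_conj_first h3]
  rw [conj_eq_of_commute (t_central h3 x c d _).symm]

theorem t_mul_mid (a x y d : G) :
    ⁅⁅a, x * y⁆, d⁆ = ⁅⁅a, x⁆, d⁆ * ⁅⁅a, y⁆, d⁆ := by
  rw [comm_mul_right_exp]
  rw [comm_pq_exp]
  rw [t_conj_first h3]
  rw [conj_eq_of_commute (t_central h3 a y d _).symm]
  exact ((t_central h3 a x d ⁅⁅a,y⁆,d⁆).eq).symm

theorem t_rep13 (a b : G) : ⁅⁅a, b⁆, a⁆ = 1 :=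
  commutatorElement_eq_one_iff_commute.mpr (commute_comm_left h3 a b).symm

theorem t_rep23 (a b : G) : ⁅⁅a, b⁆, b⁆ = 1 := engel h3 a b

omit h3 in
theorem t_rep12 (a c : G) : ⁅⁅a, a⁆, c⁆ = 1 := by
  rw [commutatorElement_self]; exact commutatorElement_one_left c

theorem t_swap23 (a b c : G) : ⁅⁅a, b⁆, c⁆ = ⁅⁅a, c⁆, b⁆⁻¹ := by
  have h0 := engel h3 a (b * c)
  rw [t_mul_mid h3, t_mul_right h3, t_mul_right h3, engel h3 a b, engel h3 a c,
    one_mul, mul_one] at h0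
  exact eq_inv_of_mul_eq_one_left h0

theorem t_swap12 (a b c : G) : ⁅⁅a, b⁆, c⁆ = ⁅⁅b, a⁆, c⁆⁻¹ := by
  have h0 : ⁅⁅a * b, a * b⁆, c⁆ = 1 := t_rep12 (a * b) c
  rw [t_mul_left h3, t_mul_mid h3, t_mul_mid h3, t_rep12 a c, t_rep12 b c,
    one_mul, mul_one] at h0
  exact eq_inv_of_mul_eq_one_left h0

theorem comm2_comm (a b c d : G) : ⁅⁅a, b⁆, ⁅c, d⁆⁆ = 1 := by
  have hv : ⁅c, d⁆ = c * (d * (c⁻¹ * d⁻¹)) := by rw [commutatorElement_def]; group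
  rw [hv, t_mul_right h3, t_mul_right h3, t_mul_right h3, t_inv_right h3, t_inv_right h3]
  have hc : Commute ⁅⁅a, b⁆, c⁆ ⁅⁅a, b⁆, d⁆ := t_central h3 a b c _
  calc ⁅⁅a,b⁆,c⁆ * (⁅⁅a,b⁆,d⁆ * (⁅⁅a,b⁆,c⁆⁻¹ * ⁅⁅a,b⁆,d⁆⁻¹))
      = (⁅⁅a,b⁆,c⁆ * ⁅⁅a,b⁆,d⁆) * (⁅⁅a,b⁆,c⁆⁻¹ * ⁅⁅a,b⁆,d⁆⁻¹) := by group
    _ = (⁅⁅a,b⁆,d⁆ * ⁅⁅a,b⁆,c⁆) * (⁅⁅a,b⁆,c⁆⁻¹ * ⁅⁅a,b⁆,d⁆⁻¹) := by rw [hc.eq]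
    _ = 1 := by group

omit h3 in
theorem conj_comm_formula (u g : G) : g * u * g⁻¹ = u * ⁅u⁻¹, g⁆ := by
  rw [commutatorElement_def]; group

end TCalc

section Counting

theorem card_le_of_gen_exp3 {G : Type*} [Group G] (hcomm : ∀ x y : G, Commute x y)
    (h3 : ∀ g : G, g ^ 3 = 1) {ι : Type*} [Fintype ι] (f : ι → G)
    (hgen : Subgroup.closure (Set.range f) = ⊤) :
    Finite G ∧ Nat.card G ≤ 3 ^ Fintype.card ι := by
  classical
  letI : CommGroup G := { (inferInstance : Group G) with mul_comm := fun a b => (hcomm a b).eq }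
  set φ : (ι → ZMod 3) → G := fun v => ∏ i, f i ^ (v i).val with hφ
  have hpowmod : ∀ (x : G) (n : ℕ), x ^ n = x ^ (n % 3) := by
    intro x n
    conv_lhs => rw [← Nat.mod_add_div n 3]
    rw [pow_add, pow_mul, h3, one_pow, mul_one]
  have hhom : ∀ v w, φ (v + w) = φ v * φ w := by
    intro v w
    rw [hφ]
    simp only
    rw [← Finset.prod_mul_distrib]
    apply Finset.prod_congr rfl
    intro i _
    rw [← pow_add]
    show f i ^ ((v i + w i).val) = f i ^ ((v i).val + (w i).val)
    rw [ZMod.val_add (v i) (w i)]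
    exact (hpowmod (f i) ((v i).val + (w i).val)).symm
  have hone : φ 0 = 1 := by
    rw [hφ]; simp
  have hsingle : ∀ i, φ (Pi.single i 1) = f i := by
    intro i
    rw [hφ]
    simp only
    rw [Finset.prod_eq_single i]
    · rw [Pi.single_eq_same]
      norm_num [ZMod.val_one]
    · intro j _ hj
      rw [Pi.single_eq_of_ne hj]
      norm_num [ZMod.val_zero]
    · intro h; exact absurd (Finset.mem_univ i) h
  let H : Subgroup G :=
    { carrier := Set.range φ
      one_mem' := ⟨0, hone⟩
      mul_mem' := by
        rintro a b ⟨v, rfl⟩ ⟨w, rfl⟩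
        exact ⟨v + w, hhom v w⟩
      inv_mem' := by
        rintro a ⟨v, rfl⟩
        refine ⟨-v, ?_⟩
        have : φ (-v) * φ v = 1 := by rw [← hhom]; simp [hone]
        exact eq_inv_of_mul_eq_one_left this }
  have hHtop : ∀ g : G, g ∈ H := by
    intro g
    have : Subgroup.closure (Set.range f) ≤ H := by
      refine (Subgroup.closure_le _).mpr ?_
      rintro p ⟨i, rfl⟩
      exact ⟨Pi.single i 1, hsingle i⟩
    exact this (hgen ▸ Subgroup.mem_top g)
  have hsurj : Function.Surjective φ := fun g => hHtop g
  refine ⟨Finite.of_surjective φ hsurj, ?_⟩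
  calc Nat.card G ≤ Nat.card (ι → ZMod 3) := Nat.card_le_card_of_surjective φ hsurj
    _ = 3 ^ Fintype.card ι := by
        rw [Nat.card_pi]
        simp [Nat.card_zmod]

end Counting


section IndexCards

/-- sorted pairs in `Fin r` -/
abbrev SortedPairs (r : ℕ) := {p : Fin r × Fin r // p.1 < p.2}
/-- sorted triples in `Fin r` -/
abbrev SortedTriples (r : ℕ) := {p : Fin r × Fin r × Fin r // p.1 < p.2.1 ∧ p.2.1 < p.2.2}

theorem card_sortedPairs (r : ℕ) : Fintype.card (SortedPairs r) = r.choose 2 := by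
  classical
  have e : SortedPairs r ≃ {s : Finset (Fin r) // s.card = 2} := by
    refine
      { toFun := fun p => ⟨{p.1.1, p.1.2}, ?_⟩
        invFun := fun s => ⟨(s.1.orderEmbOfFin s.2 0, s.1.orderEmbOfFin s.2 1),
          (s.1.orderEmbOfFin s.2).strictMono (by decide)⟩
        left_inv := ?_
        right_inv := ?_ }
    · rw [Finset.card_insert_of_notMem (by simp [p.2.ne]), Finset.card_singleton]
    · rintro ⟨⟨i, j⟩, hij⟩
      have hcard : ({i, j} : Finset (Fin r)).card = 2 := by
        rw [Finset.card_insert_of_notMem (by simp [hij.ne]), Finset.card_singleton]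
      have hmono : StrictMono (![i, j] : Fin 2 → Fin r) := by
        intro a b hab
        fin_cases a <;> fin_cases b <;> simp_all <;> omega
      have hmem : ∀ x : Fin 2, (![i, j] : Fin 2 → Fin r) x ∈ ({i, j} : Finset (Fin r)) := by
        intro x; fin_cases x <;> simp
      have huniq := Finset.orderEmbOfFin_unique hcard hmem hmono
      simp only [Subtype.mk.injEq, Prod.mk.injEq]
      exact ⟨(congrFun huniq 0).symm, (congrFun huniq 1).symm⟩
    · rintro ⟨s, hs⟩
      simp only [Subtype.mk.injEq]
      apply Finset.eq_of_subset_of_card_le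
      · intro x hx
        simp only [Finset.mem_insert, Finset.mem_singleton] at hx
        rcases hx with h | h <;> rw [h] <;> exact Finset.orderEmbOfFin_mem s hs _
      · rw [hs]
        rw [Finset.card_insert_of_notMem (by
          simp only [Finset.mem_singleton]
          exact fun h => absurd ((s.orderEmbOfFin hs).injective h) (by norm_num)),
          Finset.card_singleton]
  rw [Fintype.card_congr e, Fintype.card_finset_len, Fintype.card_fin]

theorem card_sortedTriples (r : ℕ) : Fintype.card (SortedTriples r) = r.choose 3 := by
  classical
  have e : SortedTriples r ≃ {s : Finset (Fin r) // s.card = 3} := by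
    refine
      { toFun := fun p => ⟨{p.1.1, p.1.2.1, p.1.2.2}, ?_⟩
        invFun := fun s => ⟨(s.1.orderEmbOfFin s.2 0, s.1.orderEmbOfFin s.2 1,
            s.1.orderEmbOfFin s.2 2),
          (s.1.orderEmbOfFin s.2).strictMono (by decide),
          (s.1.orderEmbOfFin s.2).strictMono (by decide)⟩
        left_inv := ?_
        right_inv := ?_ }
    · have h12 : p.1.1 ≠ p.1.2.1 := p.2.1.ne
      have h13 : p.1.1 ≠ p.1.2.2 := (p.2.1.trans p.2.2).ne
      have h23 : p.1.2.1 ≠ p.1.2.2 := p.2.2.ne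
      rw [Finset.card_insert_of_notMem (by simp [h12, h13]),
        Finset.card_insert_of_notMem (by simp [h23]), Finset.card_singleton]
    · rintro ⟨⟨i, j, k⟩, hij, hjk⟩
      have h12 : i ≠ j := hij.ne
      have h13 : i ≠ k := (hij.trans hjk).ne
      have h23 : j ≠ k := hjk.ne
      have hcard : ({i, j, k} : Finset (Fin r)).card = 3 := by
        rw [Finset.card_insert_of_notMem (by simp [h12, h13]),
          Finset.card_insert_of_notMem (by simp [h23]), Finset.card_singleton]
      have hmono : StrictMono (![i, j, k] : Fin 3 → Fin r) := by
        intro a b hab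
        fin_cases a <;> fin_cases b <;> simp_all <;> omega
      have hmem : ∀ x : Fin 3, (![i, j, k] : Fin 3 → Fin r) x ∈ ({i, j, k} : Finset (Fin r)) := by
        intro x; fin_cases x <;> simp
      have huniq := Finset.orderEmbOfFin_unique hcard hmem hmono
      simp only [Subtype.mk.injEq, Prod.mk.injEq]
      exact ⟨(congrFun huniq 0).symm, (congrFun huniq 1).symm, (congrFun huniq 2).symm⟩
    · rintro ⟨s, hs⟩
      simp only [Subtype.mk.injEq]
      apply Finset.eq_of_subset_of_card_le
      · intro x hx
        simp only [Finset.mem_insert, Finset.mem_singleton] at hx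
        rcases hx with h | h | h <;> rw [h] <;> exact Finset.orderEmbOfFin_mem s hs _
      · rw [hs]
        have hinj := (s.orderEmbOfFin hs).injective
        have h01 : s.orderEmbOfFin hs 0 ≠ s.orderEmbOfFin hs 1 :=
          fun h => absurd (hinj h) (by decide)
        have h02 : s.orderEmbOfFin hs 0 ≠ s.orderEmbOfFin hs 2 :=
          fun h => absurd (hinj h) (by decide)
        have h12' : s.orderEmbOfFin hs 1 ≠ s.orderEmbOfFin hs 2 :=
          fun h => absurd (hinj h) (by decide)
        rw [Finset.card_insert_of_notMem (by simp [h01, h02]),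
          Finset.card_insert_of_notMem (by simp [h12']), Finset.card_singleton]
  rw [Fintype.card_congr e, Fintype.card_finset_len, Fintype.card_fin]

end IndexCards

section SmallGroups

/-- Heisenberg group of order 27, exponent 3. -/
structure H27 where
  a1 : ZMod 3
  a2 : ZMod 3
  c : ZMod 3
  deriving DecidableEq

namespace H27

instance : Mul H27 := ⟨fun x y => ⟨x.a1 + y.a1, x.a2 + y.a2, x.c + y.c + x.a1 * y.a2⟩⟩
instance : One H27 := ⟨⟨0, 0, 0⟩⟩
instance : Inv H27 := ⟨fun x => x * x⟩

theorem mul_def (x y : H27) : x * y = ⟨x.a1 + y.a1, x.a2 + y.a2, x.c + y.c + x.a1 * y.a2⟩ :=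
  rfl
theorem one_def : (1 : H27) = ⟨0, 0, 0⟩ := rfl

theorem cube (x : H27) : x * x * x = 1 := by
  obtain ⟨x1, x2, x3⟩ := x
  simp only [mul_def, one_def]
  have h3 : (3 : ZMod 3) = 0 := rfl
  rw [H27.mk.injEq]
  refine ⟨by linear_combination x1 * h3, by linear_combination x2 * h3,
    by linear_combination (x3 + x1 * x2) * h3⟩

instance : Group H27 :=
  Group.ofLeftAxioms
    (by
      intro x y z
      obtain ⟨x1, x2, x3⟩ := x; obtain ⟨y1, y2, y3⟩ := y; obtain ⟨z1, z2, z3⟩ := z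
      simp only [mul_def]
      rw [H27.mk.injEq]
      refine ⟨by ring, by ring, by ring⟩)
    (by
      intro x
      obtain ⟨x1, x2, x3⟩ := x
      simp only [one_def, mul_def]
      rw [H27.mk.injEq]
      refine ⟨by ring, by ring, by ring⟩)
    (by
      intro x
      show x * x * x = 1
      exact cube x)

end H27

end SmallGroups

section E3Group

/-- An explicit group of order `3^7`, exponent 3, nilpotency class 3 (a model of `B(3,3)`). -/
structure E3 where
  a1 : ZMod 3
  a2 : ZMod 3
  a3 : ZMod 3
  b1 : ZMod 3
  b2 : ZMod 3
  b3 : ZMod 3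
  c : ZMod 3
  deriving DecidableEq

namespace E3

instance : Mul E3 :=
  ⟨fun x y =>
    ⟨x.a1 + y.a1, x.a2 + y.a2, x.a3 + y.a3,
     x.b1 + y.b1 + 2 * x.a2 * y.a1,
     x.b2 + y.b2 + 2 * x.a3 * y.a1,
     x.b3 + y.b3 + 2 * x.a3 * y.a2,
     x.c + y.c + x.b1 * y.a3 + 2 * x.b2 * y.a2 + x.b3 * y.a1
       + x.a3 * y.a1 * y.a2 + 2 * x.a2 * y.a1 * y.a3 + 2 * x.a2 * x.a3 * y.a1⟩⟩
instance : One E3 := ⟨⟨0, 0, 0, 0, 0, 0, 0⟩⟩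
instance : Inv E3 := ⟨fun x => x * x⟩

theorem mul_def (x y : E3) : x * y =
    ⟨x.a1 + y.a1, x.a2 + y.a2, x.a3 + y.a3,
     x.b1 + y.b1 + 2 * x.a2 * y.a1,
     x.b2 + y.b2 + 2 * x.a3 * y.a1,
     x.b3 + y.b3 + 2 * x.a3 * y.a2,
     x.c + y.c + x.b1 * y.a3 + 2 * x.b2 * y.a2 + x.b3 * y.a1
       + x.a3 * y.a1 * y.a2 + 2 * x.a2 * y.a1 * y.a3 + 2 * x.a2 * x.a3 * y.a1⟩ := rfl
theorem one_def : (1 : E3) = ⟨0, 0, 0, 0, 0, 0, 0⟩ := rfl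

theorem cube (x : E3) : x * x * x = 1 := by
  obtain ⟨x1, x2, x3, x4, x5, x6, x7⟩ := x
  simp only [mul_def, one_def]
  have h3 : (3 : ZMod 3) = 0 := rfl
  rw [E3.mk.injEq]
  refine ⟨by linear_combination x1 * h3, by linear_combination x2 * h3,
    by linear_combination x3 * h3,
    by linear_combination (2*x1*x2 + x4) * h3,
    by linear_combination (2*x1*x3 + x5) * h3,
    by linear_combination (2*x2*x3 + x6) * h3,
    by linear_combination (9*x1*x2*x3 + x1*x6 + 2*x2*x5 + x3*x4 + x7) * h3⟩

instance : Group E3 :=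
  Group.ofLeftAxioms
    (by
      intro x y z
      obtain ⟨x1, x2, x3, x4, x5, x6, x7⟩ := x
      obtain ⟨y1, y2, y3, y4, y5, y6, y7⟩ := y
      obtain ⟨z1, z2, z3, z4, z5, z6, z7⟩ := z
      simp only [mul_def]
      have h3 : (3 : ZMod 3) = 0 := rfl
      rw [E3.mk.injEq]
      refine ⟨by ring, by ring, by ring, by ring, by ring, by ring,
        by linear_combination (x3*y1*z2 + x3*y2*z1) * h3⟩)
    (by
      intro x
      obtain ⟨x1, x2, x3, x4, x5, x6, x7⟩ := x
      simp only [one_def, mul_def]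
      rw [E3.mk.injEq]
      refine ⟨by ring, by ring, by ring, by ring, by ring, by ring, by ring⟩)
    (by
      intro x
      show x * x * x = 1
      exact cube x)

theorem pow3 (g : E3) : g ^ 3 = 1 := by
  rw [pow_succ, pow_succ, pow_one]
  exact cube g

end E3

namespace H27

theorem pow3 (g : H27) : g ^ 3 = 1 := by
  rw [pow_succ, pow_succ, pow_one]
  exact cube g

end H27

end E3Group

section CommClosure

theorem commute_of_closure {G : Type*} [Group G] {S : Set G}
    (hS : ∀ a ∈ S, ∀ b ∈ S, Commute a b) :
    ∀ a ∈ Subgroup.closure S, ∀ b ∈ Subgroup.closure S, Commute a b := by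
  have pass1 : ∀ q ∈ S, ∀ b ∈ Subgroup.closure S, Commute q b := by
    intro q hq b hb
    have hle : Subgroup.closure S ≤ Subgroup.centralizer {q} := by
      refine (Subgroup.closure_le _).mpr ?_
      intro p hp
      rw [SetLike.mem_coe, Subgroup.mem_centralizer_iff]
      intro g hg
      rw [Set.mem_singleton_iff] at hg
      rw [hg]
      exact (hS q hq p hp).eq
    exact Subgroup.mem_centralizer_iff.mp (hle hb) q (Set.mem_singleton q)
  intro a ha b hb
  have hle : Subgroup.closure S ≤ Subgroup.centralizer {b} := by
    refine (Subgroup.closure_le _).mpr ?_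
    intro p hp
    rw [SetLike.mem_coe, Subgroup.mem_centralizer_iff]
    intro g hg
    rw [Set.mem_singleton_iff] at hg
    rw [hg]
    exact ((pass1 p hp b hb).symm).eq
  exact (Subgroup.mem_centralizer_iff.mp (hle ha) b (Set.mem_singleton b)).symm

end CommClosure

section Detectors

namespace H27

def ga : H27 := ⟨1, 0, 0⟩
def gb : H27 := ⟨0, 1, 0⟩

def D : Subgroup H27 where
  carrier := {g | g.a1 = 0 ∧ g.a2 = 0}
  one_mem' := ⟨rfl, rfl⟩
  mul_mem' := by
    rintro a b ⟨ha1, ha2⟩ ⟨hb1, hb2⟩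
    constructor
    · show a.a1 + b.a1 = 0
      rw [ha1, hb1, add_zero]
    · show a.a2 + b.a2 = 0
      rw [ha2, hb2, add_zero]
  inv_mem' := by
    rintro a ⟨ha1, ha2⟩
    constructor
    · show a.a1 + a.a1 = 0
      rw [ha1, add_zero]
    · show a.a2 + a.a2 = 0
      rw [ha2, add_zero]

theorem comm_mem_D (g h : H27) : ⁅g, h⁆ ∈ D := by
  have h3 : (3 : ZMod 3) = 0 := rfl
  constructor
  · show ((g.a1 + h.a1) + (g.a1 + g.a1)) + (h.a1 + h.a1) = 0
    linear_combination (g.a1 + h.a1) * h3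
  · show ((g.a2 + h.a2) + (g.a2 + g.a2)) + (h.a2 + h.a2) = 0
    linear_combination (g.a2 + h.a2) * h3

def zeta : ↥D →* Multiplicative (ZMod 3) :=
  MonoidHom.mk' (fun d => Multiplicative.ofAdd d.1.c) (by
    rintro ⟨a, ha1, ha2⟩ ⟨b, hb1, hb2⟩
    have : (a * b).c = a.c + b.c := by
      show a.c + b.c + a.a1 * b.a2 = _
      rw [hb2, mul_zero, add_zero]
    show Multiplicative.ofAdd ((a * b).c) = Multiplicative.ofAdd a.c * Multiplicative.ofAdd b.c
    rw [this]
    rfl)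

theorem zeta_apply (d : ↥D) : zeta d = Multiplicative.ofAdd d.1.c := rfl

end H27

namespace E3

def gx1 : E3 := ⟨1, 0, 0, 0, 0, 0, 0⟩
def gx2 : E3 := ⟨0, 1, 0, 0, 0, 0, 0⟩
def gx3 : E3 := ⟨0, 0, 1, 0, 0, 0, 0⟩

def D : Subgroup E3 where
  carrier := {g | g.a1 = 0 ∧ g.a2 = 0 ∧ g.a3 = 0}
  one_mem' := ⟨rfl, rfl, rfl⟩
  mul_mem' := by
    rintro a b ⟨ha1, ha2, ha3⟩ ⟨hb1, hb2, hb3⟩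
    refine ⟨?_, ?_, ?_⟩
    · show a.a1 + b.a1 = 0
      rw [ha1, hb1, add_zero]
    · show a.a2 + b.a2 = 0
      rw [ha2, hb2, add_zero]
    · show a.a3 + b.a3 = 0
      rw [ha3, hb3, add_zero]
  inv_mem' := by
    rintro a ⟨ha1, ha2, ha3⟩
    refine ⟨?_, ?_, ?_⟩
    · show a.a1 + a.a1 = 0
      rw [ha1, add_zero]
    · show a.a2 + a.a2 = 0
      rw [ha2, add_zero]
    · show a.a3 + a.a3 = 0
      rw [ha3, add_zero]

theorem comm_mem_D (g h : E3) : ⁅g, h⁆ ∈ D := by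
  have h3 : (3 : ZMod 3) = 0 := rfl
  refine ⟨?_, ?_, ?_⟩
  · show ((g.a1 + h.a1) + (g.a1 + g.a1)) + (h.a1 + h.a1) = 0
    linear_combination (g.a1 + h.a1) * h3
  · show ((g.a2 + h.a2) + (g.a2 + g.a2)) + (h.a2 + h.a2) = 0
    linear_combination (g.a2 + h.a2) * h3
  · show ((g.a3 + h.a3) + (g.a3 + g.a3)) + (h.a3 + h.a3) = 0
    linear_combination (g.a3 + h.a3) * h3

def zeta : ↥D →* Multiplicative (ZMod 3) :=
  MonoidHom.mk' (fun d => Multiplicative.ofAdd d.1.c) (by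
    rintro ⟨a, ha1, ha2, ha3⟩ ⟨b, hb1, hb2, hb3⟩
    have hc : (a * b).c = a.c + b.c := by
      show a.c + b.c + a.b1 * b.a3 + 2 * a.b2 * b.a2 + a.b3 * b.a1
          + a.a3 * b.a1 * b.a2 + 2 * a.a2 * b.a1 * b.a3 + 2 * a.a2 * a.a3 * b.a1 = _
      rw [hb1, hb2, hb3]
      ring
    show Multiplicative.ofAdd ((a * b).c) = Multiplicative.ofAdd a.c * Multiplicative.ofAdd b.c
    rw [hc]
    rfl)

theorem zeta_apply (d : ↥D) : zeta d = Multiplicative.ofAdd d.1.c := rfl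

end E3

end Detectors

namespace BurnsideProof

variable {r : ℕ}

def bN (r : ℕ) : Subgroup (FreeGroup (Fin r)) :=
  Subgroup.normalClosure {x : FreeGroup (Fin r) | ∃ w : FreeGroup (Fin r), x = w ^ 3}

instance (r : ℕ) : (bN r).Normal := Subgroup.normalClosure_normal

def bmk : FreeGroup (Fin r) →* FreeBurnsideGroup r 3 := QuotientGroup.mk' (bN r)

def xg (i : Fin r) : FreeBurnsideGroup r 3 := bmk (FreeGroup.of i)

theorem bmk_surjective : Function.Surjective (bmk (r := r)) :=
  QuotientGroup.mk'_surjective (bN r)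

theorem bh3 : ∀ g : FreeBurnsideGroup r 3, g ^ 3 = 1 := by
  intro g
  obtain ⟨w, rfl⟩ := bmk_surjective g
  rw [← map_pow]
  have hmem : w ^ 3 ∈ bN r := Subgroup.subset_normalClosure ⟨w, rfl⟩
  exact (QuotientGroup.eq_one_iff _).mpr hmem

theorem bgen : Subgroup.closure (Set.range (xg (r := r))) = ⊤ := by
  have h1 : Subgroup.closure (Set.range (FreeGroup.of (α := Fin r))) = ⊤ :=
    FreeGroup.closure_range_of (Fin r)
  have h2 : Set.range (xg (r := r)) = bmk '' Set.range (FreeGroup.of (α := Fin r)) := by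
    rw [← Set.range_comp]
    rfl
  rw [h2, ← MonoidHom.map_closure, h1]
  exact Subgroup.map_top_of_surjective _ bmk_surjective

def blift {H : Type*} [Group H] (hH : ∀ h : H, h ^ 3 = 1) (g : Fin r → H) :
    FreeBurnsideGroup r 3 →* H :=
  QuotientGroup.lift (bN r) (FreeGroup.lift g) (fun w hw => by
    have hle : bN r ≤ (FreeGroup.lift g).ker :=
      Subgroup.normalClosure_le_normal (by
        rintro _ ⟨v, rfl⟩
        rw [SetLike.mem_coe, MonoidHom.mem_ker, map_pow]
        exact hH _)
    exact hle hw)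

theorem blift_xg {H : Type*} [Group H] (hH : ∀ h : H, h ^ 3 = 1) (g : Fin r → H) (i : Fin r) :
    blift hH g (xg i) = g i := by
  show QuotientGroup.lift (bN r) (FreeGroup.lift g) _ ((QuotientGroup.mk' (bN r)) (FreeGroup.of i)) = g i
  rw [QuotientGroup.mk'_apply, QuotientGroup.lift_mk]
  exact FreeGroup.lift_apply_of

/-- pair generators of the subgroup `C2`. -/
def pairGen (p : SortedPairs r) : FreeBurnsideGroup r 3 := ⁅xg p.1.1, xg p.1.2⁆

/-- triple generators of the subgroup `C2`. -/
def tripGen (τ : SortedTriples r) : FreeBurnsideGroup r 3 :=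
  ⁅⁅xg τ.1.1, xg τ.1.2.1⁆, xg τ.1.2.2⁆

def S2 (r : ℕ) : Set (FreeBurnsideGroup r 3) := Set.range pairGen ∪ Set.range tripGen

def C2 (r : ℕ) : Subgroup (FreeBurnsideGroup r 3) := Subgroup.closure (S2 r)

theorem tin {i j : Fin r} (hij : i < j) (k : Fin r) :
    ⁅⁅xg i, xg j⁆, xg k⁆ ∈ C2 r := by
  rcases lt_trichotomy k i with hki | hki | hki
  · rw [t_swap23 bh3, t_swap12 bh3, inv_inv]
    exact Subgroup.subset_closure (Or.inr ⟨⟨(k, i, j), hki, hij⟩, rfl⟩)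
  · rw [← hki, t_rep13 bh3]
    exact one_mem _
  · rcases lt_trichotomy k j with hkj | hkj | hkj
    · rw [t_swap23 bh3]
      exact Subgroup.inv_mem _ (Subgroup.subset_closure (Or.inr ⟨⟨(i, k, j), hki, hkj⟩, rfl⟩))
    · rw [← hkj, t_rep23 bh3]
      exact one_mem _
    · exact Subgroup.subset_closure (Or.inr ⟨⟨(i, j, k), hij, hkj⟩, rfl⟩)

theorem tmemC2 (i j k : Fin r) : ⁅⁅xg i, xg j⁆, xg k⁆ ∈ C2 r := by
  rcases lt_trichotomy i j with hij | hij | hij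
  · exact tin hij k
  · rw [← hij, t_rep12]
    exact one_mem _
  · rw [t_swap12 bh3]
    exact Subgroup.inv_mem _ (tin hij k)

theorem tallC2 (i j : Fin r) (g : FreeBurnsideGroup r 3) :
    ⁅⁅xg i, xg j⁆, g⁆ ∈ C2 r := by
  let K : Subgroup (FreeBurnsideGroup r 3) :=
    { carrier := {g | ⁅⁅xg i, xg j⁆, g⁆ ∈ C2 r}
      one_mem' := by
        show ⁅⁅xg i, xg j⁆, (1 : FreeBurnsideGroup r 3)⁆ ∈ C2 r
        rw [commutatorElement_one_right]
        exact one_mem _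
      mul_mem' := by
        intro a b ha hb
        show ⁅⁅xg i, xg j⁆, a * b⁆ ∈ C2 r
        rw [t_mul_right bh3]
        exact mul_mem ha hb
      inv_mem' := by
        intro a ha
        show ⁅⁅xg i, xg j⁆, a⁻¹⁆ ∈ C2 r
        rw [t_inv_right bh3]
        exact Subgroup.inv_mem _ ha }
  have hle : Subgroup.closure (Set.range (xg (r := r))) ≤ K := by
    refine (Subgroup.closure_le _).mpr ?_
    rintro _ ⟨k, rfl⟩
    exact tmemC2 i j k
  rw [bgen] at hle
  exact hle (Subgroup.mem_top g)

theorem pairmemC2 (i j : Fin r) : ⁅xg i, xg j⁆ ∈ C2 r := by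
  rcases lt_trichotomy i j with hij | hij | hij
  · exact Subgroup.subset_closure (Or.inl ⟨⟨(i, j), hij⟩, rfl⟩)
  · rw [← hij, commutatorElement_self]
    exact one_mem _
  · rw [← commutatorElement_inv]
    exact Subgroup.inv_mem _ (Subgroup.subset_closure (Or.inl ⟨⟨(j, i), hij⟩, rfl⟩))

instance : (C2 r).Normal := by
  constructor
  intro n hn g
  have himg : ∀ s ∈ S2 r, g * s * g⁻¹ ∈ C2 r := by
    rintro s (⟨p, rfl⟩ | ⟨τ, rfl⟩)
    · rw [conj_comm_formula]
      refine mul_mem (Subgroup.subset_closure (Or.inl ⟨p, rfl⟩)) ?_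
      unfold pairGen
      rw [commutatorElement_inv]
      exact tallC2 _ _ g
    · have hcent : g * tripGen τ * g⁻¹ = tripGen τ :=
        conj_eq_of_commute ((t_central bh3 (xg τ.1.1) (xg τ.1.2.1) (xg τ.1.2.2) g).symm)
      rw [hcent]
      exact Subgroup.subset_closure (Or.inr ⟨τ, rfl⟩)
  have hmap : Subgroup.map (MulAut.conj g).toMonoidHom (C2 r) ≤ C2 r := by
    rw [C2, MonoidHom.map_closure]
    refine (Subgroup.closure_le _).mpr ?_
    rintro _ ⟨s, hs, rfl⟩
    show (MulAut.conj g).toMonoidHom s ∈ C2 r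
    simpa using himg s hs
  have : (MulAut.conj g).toMonoidHom n ∈ Subgroup.map (MulAut.conj g).toMonoidHom (C2 r) :=
    Subgroup.mem_map_of_mem _ hn
  have h2 := hmap this
  simpa using h2

end BurnsideProof

namespace BurnsideProof

variable {r : ℕ}

theorem hS2comm : ∀ a ∈ S2 r, ∀ b ∈ S2 r, Commute a b := by
  rintro a (⟨p, rfl⟩ | ⟨τ, rfl⟩) b (⟨q, rfl⟩ | ⟨σ, rfl⟩)
  · exact commutatorElement_eq_one_iff_commute.mp (comm2_comm bh3 _ _ _ _)
  · exact (t_central bh3 _ _ _ _).symm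
  · exact t_central bh3 _ _ _ _
  · exact t_central bh3 _ _ _ _

theorem c2comm : ∀ a b : ↥(C2 r), Commute a b := by
  intro a b
  exact Subtype.ext (commute_of_closure hS2comm a.1 a.2 b.1 b.2).eq

theorem c2h3 : ∀ g : ↥(C2 r), g ^ 3 = 1 := by
  intro g
  apply Subtype.ext
  push_cast
  exact bh3 _

def genC2 : SortedPairs r ⊕ SortedTriples r → ↥(C2 r) :=
  Sum.elim (fun p => ⟨pairGen p, Subgroup.subset_closure (Or.inl ⟨p, rfl⟩)⟩)
    (fun τ => ⟨tripGen τ, Subgroup.subset_closure (Or.inr ⟨τ, rfl⟩)⟩)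

theorem genC2_top : Subgroup.closure (Set.range (genC2 (r := r))) = ⊤ := by
  have h := Subgroup.closure_preimage_eq_top (S2 r)
  rw [eq_top_iff]
  calc (⊤ : Subgroup ↥(C2 r)) = Subgroup.closure ((C2 r).subtype ⁻¹' S2 r) := h.symm
    _ ≤ Subgroup.closure (Set.range (genC2 (r := r))) := by
        apply Subgroup.closure_mono
        rintro ⟨g, hg⟩ hmem
        simp only [Set.mem_preimage] at hmem
        rcases hmem with ⟨p, hp⟩ | ⟨τ, hτ⟩
        · exact ⟨Sum.inl p, Subtype.ext hp⟩
        · exact ⟨Sum.inr τ, Subtype.ext hτ⟩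

theorem c2bounds : Finite ↥(C2 r) ∧ Nat.card ↥(C2 r) ≤ 3 ^ (r.choose 2 + r.choose 3) := by
  have h := card_le_of_gen_exp3 c2comm c2h3 (genC2 (r := r)) genC2_top
  rwa [Fintype.card_sum, card_sortedPairs, card_sortedTriples] at h

def Qr (r : ℕ) : Type := FreeBurnsideGroup r 3 ⧸ C2 r

instance : Group (Qr r) := inferInstanceAs (Group (FreeBurnsideGroup r 3 ⧸ C2 r))

def qmk : FreeBurnsideGroup r 3 →* Qr r := QuotientGroup.mk' (C2 r)

theorem qmk_surjective : Function.Surjective (qmk (r := r)) :=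
  QuotientGroup.mk'_surjective (C2 r)

theorem qgen : Subgroup.closure (Set.range (fun i => qmk (xg i) : Fin r → Qr r)) = ⊤ := by
  have h2 : Set.range (fun i => qmk (xg i) : Fin r → Qr r) = qmk '' Set.range (xg (r := r)) := by
    rw [← Set.range_comp]
    rfl
  rw [h2, ← MonoidHom.map_closure, bgen]
  exact Subgroup.map_top_of_surjective _ qmk_surjective

theorem qh3 : ∀ g : Qr r, g ^ 3 = 1 := by
  intro g
  obtain ⟨b, rfl⟩ := qmk_surjective g
  rw [← map_pow, bh3, map_one]

theorem qcomm : ∀ a b : Qr r, Commute a b := by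
  have hS : ∀ a ∈ Set.range (fun i => qmk (xg i) : Fin r → Qr r),
      ∀ b ∈ Set.range (fun i => qmk (xg i) : Fin r → Qr r), Commute a b := by
    rintro _ ⟨i, rfl⟩ _ ⟨j, rfl⟩
    rw [← commutatorElement_eq_one_iff_commute, ← map_commutatorElement]
    exact (QuotientGroup.eq_one_iff _).mpr (pairmemC2 i j)
  intro a b
  have ha : a ∈ Subgroup.closure (Set.range (fun i => qmk (xg i) : Fin r → Qr r)) := by
    rw [qgen]; exact Subgroup.mem_top a
  have hb : b ∈ Subgroup.closure (Set.range (fun i => qmk (xg i) : Fin r → Qr r)) := by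
    rw [qgen]; exact Subgroup.mem_top b
  exact commute_of_closure hS a ha b hb

theorem qbounds : Finite (Qr r) ∧ Nat.card (Qr r) ≤ 3 ^ r := by
  have h := card_le_of_gen_exp3 qcomm qh3 (fun i => qmk (xg i) : Fin r → Qr r) qgen
  rwa [Fintype.card_fin] at h

-- lower bound for the quotient
theorem mult3 : ∀ m : Multiplicative (ZMod 3), m ^ 3 = 1 := by decide

theorem key_pow : ∀ m : Multiplicative (ZMod 3),
    (Multiplicative.ofAdd (1 : ZMod 3)) ^ (Multiplicative.toAdd m).val = m := by decide

theorem hT3 : ∀ v : Fin r → Multiplicative (ZMod 3), v ^ 3 = 1 := by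
  intro v
  funext i
  exact mult3 (v i)

def psi0 : FreeBurnsideGroup r 3 →* (Fin r → Multiplicative (ZMod 3)) :=
  blift hT3 (fun i => Pi.mulSingle i (Multiplicative.ofAdd (1 : ZMod 3)))

theorem psi0_ker : C2 r ≤ (psi0 (r := r)).ker := by
  refine (Subgroup.closure_le _).mpr ?_
  rintro s (⟨p, rfl⟩ | ⟨τ, rfl⟩)
  · rw [SetLike.mem_coe, MonoidHom.mem_ker]
    unfold pairGen
    rw [map_commutatorElement]
    exact commutatorElement_eq_one_iff_commute.mpr (Commute.all _ _)
  · rw [SetLike.mem_coe, MonoidHom.mem_ker]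
    unfold tripGen
    rw [map_commutatorElement]
    exact commutatorElement_eq_one_iff_commute.mpr (Commute.all _ _)

def Phiq : Qr r →* (Fin r → Multiplicative (ZMod 3)) :=
  QuotientGroup.lift (C2 r) psi0 psi0_ker

theorem Phiq_val (i : Fin r) :
    Phiq (qmk (xg i)) = Pi.mulSingle i (Multiplicative.ofAdd (1 : ZMod 3)) := by
  show QuotientGroup.lift (C2 r) psi0 _ ((QuotientGroup.mk' (C2 r)) (xg i)) = _
  rw [QuotientGroup.mk'_apply, QuotientGroup.lift_mk]
  exact blift_xg _ _ i

theorem Phiq_surj : Function.Surjective (Phiq (r := r)) := by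
  letI : CommMonoid (Qr r) :=
    { (inferInstance : Group (Qr r)) with mul_comm := fun a b => (qcomm a b).eq }
  intro v
  refine ⟨∏ i, (qmk (xg i)) ^ (Multiplicative.toAdd (v i)).val, ?_⟩
  rw [map_prod]
  funext j
  rw [Finset.prod_apply]
  have : ∀ i, (Phiq ((qmk (xg i)) ^ (Multiplicative.toAdd (v i)).val)) j
      = Pi.mulSingle (M := fun _ => Multiplicative (ZMod 3)) i (v i) j := by
    intro i
    rw [map_pow, Phiq_val, ← Pi.mulSingle_pow, key_pow]
  rw [Finset.prod_congr rfl (fun i _ => this i)]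
  have := Finset.univ_prod_mulSingle v
  calc ∏ i, Pi.mulSingle (M := fun _ => Multiplicative (ZMod 3)) i (v i) j
      = (∏ i, Pi.mulSingle (M := fun _ => Multiplicative (ZMod 3)) i (v i)) j := by
        rw [Finset.prod_apply]
    _ = v j := by rw [this]

theorem qcard : Nat.card (Qr r) = 3 ^ r := by
  have h1 := qbounds (r := r)
  have : Finite (Qr r) := h1.1
  refine le_antisymm h1.2 ?_
  calc (3 : ℕ) ^ r = Nat.card (Fin r → Multiplicative (ZMod 3)) := by
        rw [Nat.card_pi]
        simp [Nat.card_eq_fintype_card]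
    _ ≤ Nat.card (Qr r) := Nat.card_le_card_of_surjective _ Phiq_surj

end BurnsideProof

namespace BurnsideProof

variable {r : ℕ}

def gfun2 (q : SortedPairs r) (l : Fin r) : H27 :=
  if l = q.1.1 then H27.ga else if l = q.1.2 then H27.gb else 1

def gfun3 (τ : SortedTriples r) (l : Fin r) : E3 :=
  if l = τ.1.1 then E3.gx1 else if l = τ.1.2.1 then E3.gx2
    else if l = τ.1.2.2 then E3.gx3 else 1

def psiH (q : SortedPairs r) : FreeBurnsideGroup r 3 →* H27 := blift H27.pow3 (gfun2 q)

def psiE (τ : SortedTriples r) : FreeBurnsideGroup r 3 →* E3 := blift E3.pow3 (gfun3 τ)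

theorem psiH_memD (q : SortedPairs r) (c : ↥(C2 r)) : psiH q c.1 ∈ H27.D := by
  have hle : C2 r ≤ Subgroup.comap (psiH q) H27.D := by
    refine (Subgroup.closure_le _).mpr ?_
    rintro s (⟨p, rfl⟩ | ⟨τ, rfl⟩)
    · show psiH q (pairGen p) ∈ H27.D
      unfold pairGen
      rw [map_commutatorElement]
      exact H27.comm_mem_D _ _
    · show psiH q (tripGen τ) ∈ H27.D
      unfold tripGen
      rw [map_commutatorElement]
      exact H27.comm_mem_D _ _
  exact hle c.2

theorem psiE_memD (τ : SortedTriples r) (c : ↥(C2 r)) : psiE τ c.1 ∈ E3.D := by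
  have hle : C2 r ≤ Subgroup.comap (psiE τ) E3.D := by
    refine (Subgroup.closure_le _).mpr ?_
    rintro s (⟨p, rfl⟩ | ⟨σ, rfl⟩)
    · show psiE τ (pairGen p) ∈ E3.D
      unfold pairGen
      rw [map_commutatorElement]
      exact E3.comm_mem_D _ _
    · show psiE τ (tripGen σ) ∈ E3.D
      unfold tripGen
      rw [map_commutatorElement]
      exact E3.comm_mem_D _ _
  exact hle c.2

def theta2 (q : SortedPairs r) : ↥(C2 r) →* Multiplicative (ZMod 3) :=
  H27.zeta.comp (((psiH q).comp (C2 r).subtype).codRestrict H27.D (psiH_memD q))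

def theta3 (τ : SortedTriples r) : ↥(C2 r) →* Multiplicative (ZMod 3) :=
  E3.zeta.comp (((psiE τ).comp (C2 r).subtype).codRestrict E3.D (psiE_memD τ))

theorem theta2_apply (q : SortedPairs r) (c : ↥(C2 r)) :
    theta2 q c = Multiplicative.ofAdd ((psiH q c.1).c) := rfl

theorem theta3_apply (τ : SortedTriples r) (c : ↥(C2 r)) :
    theta3 τ c = Multiplicative.ofAdd ((psiE τ c.1).c) := rfl

def Theta : ↥(C2 r) →* ((SortedPairs r ⊕ SortedTriples r) → Multiplicative (ZMod 3)) :=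
  MonoidHom.mk' (fun c => Sum.elim (fun q => theta2 q c) (fun τ => theta3 τ c)) (by
    intro a b
    funext idx
    cases idx with
    | inl q => simp [map_mul]
    | inr τ => simp [map_mul])

theorem psiH_pairGen (q : SortedPairs r) (p : SortedPairs r) :
    psiH q (pairGen p) = ⁅gfun2 q p.1.1, gfun2 q p.1.2⁆ := by
  unfold pairGen
  rw [map_commutatorElement]
  show ⁅blift H27.pow3 (gfun2 q) (xg p.1.1), blift H27.pow3 (gfun2 q) (xg p.1.2)⁆ = _
  rw [blift_xg, blift_xg]

theorem psiH_tripGen (q : SortedPairs r) (τ : SortedTriples r) :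
    psiH q (tripGen τ) = ⁅⁅gfun2 q τ.1.1, gfun2 q τ.1.2.1⁆, gfun2 q τ.1.2.2⁆ := by
  unfold tripGen
  rw [map_commutatorElement, map_commutatorElement]
  show ⁅⁅blift H27.pow3 (gfun2 q) (xg τ.1.1), blift H27.pow3 (gfun2 q) (xg τ.1.2.1)⁆,
    blift H27.pow3 (gfun2 q) (xg τ.1.2.2)⁆ = _
  rw [blift_xg, blift_xg, blift_xg]

theorem psiE_pairGen (τ : SortedTriples r) (p : SortedPairs r) :
    psiE τ (pairGen p) = ⁅gfun3 τ p.1.1, gfun3 τ p.1.2⁆ := by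
  unfold pairGen
  rw [map_commutatorElement]
  show ⁅blift E3.pow3 (gfun3 τ) (xg p.1.1), blift E3.pow3 (gfun3 τ) (xg p.1.2)⁆ = _
  rw [blift_xg, blift_xg]

theorem psiE_tripGen (τ σ : SortedTriples r) :
    psiE τ (tripGen σ) = ⁅⁅gfun3 τ σ.1.1, gfun3 τ σ.1.2.1⁆, gfun3 τ σ.1.2.2⁆ := by
  unfold tripGen
  rw [map_commutatorElement, map_commutatorElement]
  show ⁅⁅blift E3.pow3 (gfun3 τ) (xg σ.1.1), blift E3.pow3 (gfun3 τ) (xg σ.1.2.1)⁆,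
    blift E3.pow3 (gfun3 τ) (xg σ.1.2.2)⁆ = _
  rw [blift_xg, blift_xg, blift_xg]

theorem Theta_val (idx : SortedPairs r ⊕ SortedTriples r) :
    Theta (genC2 idx) = Pi.mulSingle idx (Multiplicative.ofAdd (1 : ZMod 3)) := by
  funext jdx
  rw [Pi.mulSingle_apply]
  cases jdx with
  | inl q =>
    cases idx with
    | inl p =>
      show theta2 q (genC2 (Sum.inl p)) = _
      rw [theta2_apply]
      have hval : (genC2 (Sum.inl p) : ↥(C2 r)).1 = pairGen p := rfl
      rw [hval, psiH_pairGen]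
      simp only [Sum.inl.injEq]
      obtain ⟨⟨p1, p2⟩, hp⟩ := p
      obtain ⟨⟨q1, q2⟩, hq⟩ := q
      dsimp only at hp hq
      rcases eq_or_ne (⟨(q1, q2), hq⟩ : SortedPairs r) ⟨(p1, p2), hp⟩ with heq | hne
      · rw [if_pos heq]
        obtain ⟨h1, h2⟩ : q1 = p1 ∧ q2 = p2 := by
          have := Subtype.ext_iff.mp heq
          exact ⟨congrArg Prod.fst this, congrArg Prod.snd this⟩
        subst h1; subst h2
        unfold gfun2
        rw [if_pos rfl, if_neg (ne_of_gt hp), if_pos rfl]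
        decide
      · rw [if_neg hne]
        unfold gfun2
        split_ifs with h1 h2 h3 h4 h5 h6 h7 h8 <;>
          first
            | decide
            | (exfalso;
               simp only [Fin.ext_iff, Fin.lt_def] at *;
               omega)
            | (exfalso; apply hne; apply Subtype.ext;
               simp only [Prod.ext_iff];
               exact ⟨by first | assumption | (symm; assumption),
                 by first | assumption | (symm; assumption)⟩)
    | inr σ =>
      show theta2 q (genC2 (Sum.inr σ)) = _
      rw [theta2_apply]
      have hval : (genC2 (Sum.inr σ) : ↥(C2 r)).1 = tripGen σ := rfl
      rw [hval, psiH_tripGen]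
      simp only [reduceCtorEq, if_false]
      unfold gfun2
      split_ifs <;> decide
  | inr τ =>
    cases idx with
    | inl p =>
      show theta3 τ (genC2 (Sum.inl p)) = _
      rw [theta3_apply]
      have hval : (genC2 (Sum.inl p) : ↥(C2 r)).1 = pairGen p := rfl
      rw [hval, psiE_pairGen]
      simp only [reduceCtorEq, if_false]
      unfold gfun3
      split_ifs <;> decide
    | inr σ =>
      show theta3 τ (genC2 (Sum.inr σ)) = _
      rw [theta3_apply]
      have hval : (genC2 (Sum.inr σ) : ↥(C2 r)).1 = tripGen σ := rfl
      rw [hval, psiE_tripGen]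
      simp only [Sum.inr.injEq]
      obtain ⟨⟨t1, t2, t3⟩, ht12, ht23⟩ := τ
      obtain ⟨⟨s1, s2, s3⟩, hs12, hs23⟩ := σ
      dsimp only at ht12 ht23 hs12 hs23
      rcases eq_or_ne (⟨(t1, t2, t3), ht12, ht23⟩ : SortedTriples r)
        ⟨(s1, s2, s3), hs12, hs23⟩ with heq | hne
      · rw [if_pos heq]
        obtain ⟨h1, h2, h3⟩ : t1 = s1 ∧ t2 = s2 ∧ t3 = s3 := by
          have := Subtype.ext_iff.mp heq
          exact ⟨congrArg Prod.fst this, congrArg (fun x => x.2.1) this,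
            congrArg (fun x => x.2.2) this⟩
        subst h1; subst h2; subst h3
        unfold gfun3
        rw [if_pos rfl, if_neg (ne_of_gt ht12), if_pos rfl,
          if_neg (ne_of_gt (ht12.trans ht23)), if_neg (ne_of_gt ht23), if_pos rfl]
        decide
      · rw [if_neg hne]
        unfold gfun3
        split_ifs <;>
          first
            | decide
            | (exfalso;
               simp only [Fin.ext_iff, Fin.lt_def] at *;
               omega)
            | (exfalso; apply hne; apply Subtype.ext;
               simp only [Prod.ext_iff];
               exact ⟨by first | assumption | (symm; assumption),
                 by first | assumption | (symm; assumption),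
                 by first | assumption | (symm; assumption)⟩)

end BurnsideProof

namespace BurnsideProof

variable {r : ℕ}

theorem Theta_surj : Function.Surjective (Theta (r := r)) := by
  letI : CommMonoid ↥(C2 r) :=
    { (inferInstance : Group ↥(C2 r)) with mul_comm := fun a b => (c2comm a b).eq }
  intro v
  refine ⟨∏ idx, (genC2 idx) ^ (Multiplicative.toAdd (v idx)).val, ?_⟩
  rw [map_prod]
  funext jdx
  rw [Finset.prod_apply]
  have hterm : ∀ idx, (Theta ((genC2 idx) ^ (Multiplicative.toAdd (v idx)).val)) jdx
      = Pi.mulSingle (M := fun _ => Multiplicative (ZMod 3)) idx (v idx) jdx := by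
    intro idx
    rw [map_pow, Theta_val, ← Pi.mulSingle_pow, key_pow]
  rw [Finset.prod_congr rfl (fun idx _ => hterm idx)]
  have huniv := Finset.univ_prod_mulSingle v
  calc ∏ idx, Pi.mulSingle (M := fun _ => Multiplicative (ZMod 3)) idx (v idx) jdx
      = (∏ idx, Pi.mulSingle (M := fun _ => Multiplicative (ZMod 3)) idx (v idx)) jdx := by
        rw [Finset.prod_apply]
    _ = v jdx := by rw [huniv]

theorem c2card : Nat.card ↥(C2 r) = 3 ^ (r.choose 2 + r.choose 3) := by
  have h1 := c2bounds (r := r)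
  have : Finite ↥(C2 r) := h1.1
  refine le_antisymm h1.2 ?_
  calc (3 : ℕ) ^ (r.choose 2 + r.choose 3)
      = Nat.card ((SortedPairs r ⊕ SortedTriples r) → Multiplicative (ZMod 3)) := by
        rw [Nat.card_pi]
        rw [Finset.prod_const]
        rw [Finset.card_univ, Fintype.card_sum, card_sortedPairs, card_sortedTriples]
        norm_num [Nat.card_eq_fintype_card]
    _ ≤ Nat.card ↥(C2 r) := Nat.card_le_card_of_surjective _ Theta_surj

end BurnsideProof

open BurnsideProof in
/-- Levi–van der Waerden: the free Burnside group `B(r,3)` of exponent 3 is finite of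
order `3^(r + C(r,2) + C(r,3))`. -/
theorem freeBurnside_exponent_three_card (r : ℕ) :
    Finite (FreeBurnsideGroup r 3) ∧
      Nat.card (FreeBurnsideGroup r 3) = 3 ^ (r + r.choose 2 + r.choose 3) := by
  haveI hq : Finite (FreeBurnsideGroup r 3 ⧸ C2 r) := (qbounds (r := r)).1
  haveI hc : Finite ↥(C2 r) := (c2bounds (r := r)).1
  have hfin : Finite (FreeBurnsideGroup r 3) :=
    Finite.of_equiv _ (Subgroup.groupEquivQuotientProdSubgroup (s := C2 r)).symm
  refine ⟨hfin, ?_⟩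
  have hmul := Subgroup.card_eq_card_quotient_mul_card_subgroup (C2 r)
  have hq3 : Nat.card (FreeBurnsideGroup r 3 ⧸ C2 r) = 3 ^ r := qcard
  rw [hmul, hq3, c2card, ← pow_add, add_assoc]
end
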